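/- arXiv:1302.4207 — 2 statements merged into one kernel-verified Lean document; each statement's English description precedes it below -/
import Mathlib

section
/- (Base case of the composition theorem.) Fix n ∈ ℕ and finite sets X, Z. Let g ⊆ {0,1}^n × Z, and for 1 ≤ i ≤ n let f^i ⊆ X^{m_i} × {0,1} be non-trivial. Set h = g ∘ (f¹,...,fⁿ), and let ḡ be the relation obtained from g by substituting, for each i such that (f^i)⁻¹(b_i) = dom f^i for some b_i ∈ {0,1}, the constant b_i as the i'th input to g. If h is constant, then ḡ is constant. -/
/-!
Let `(y, z) ∈ ḡ`. No `yᵢ` is the complement of a value forced by `fⁱ`, so, the outputs being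
Boolean, there is an input block on which `fⁱ` takes the value `yᵢ` and only that value.
Concatenating these blocks gives an input on which `h` takes `z`, hence also its constant value
`z₀`; the only inner outputs available there are `y`, so `(y, z₀) ∈ g`, i.e. `(y, z₀) ∈ ḡ`.
-/

/-- A decision tree over input alphabet `X` with `n` variables and output set `Y`:
either a leaf labelled by an output, or an internal vertex labelled by a variable
index with one child for each element of `X`. -/
inductive DTree (X : Type) (n : ℕ) (Y : Type) : Type where
  | leaf : Y → DTree X n Y
  | node : Fin n → (X → DTree X n Y) → DTree X n Y

namespace DTree

/-- The function computed by a decision tree: query the variable labelling the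
current vertex, follow the corresponding edge, and output the leaf label reached. -/
def eval {X Y : Type} {n : ℕ} : DTree X n Y → (Fin n → X) → Y
  | leaf y, _ => y
  | node i c, x => (c (x i)).eval x

/-- The weighted depth of a decision tree with weights `w`: the maximum, over all
root-to-leaf paths, of the sum of `w i` over the query labels `i` on that path. -/
def wdepth {X Y : Type} {n : ℕ} [Fintype X] (w : Fin n → ℕ) : DTree X n Y → ℕ
  | leaf _ => 0
  | node i c => w i + Finset.univ.sup fun b => (c b).wdepth w

end DTree

/-- A decision tree `T` computes the relation `f ⊆ X^n × Y` if for every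
`x ∈ dom f`, `(x, T.eval x) ∈ f`. -/
def Computes {X Y : Type} {n : ℕ} (T : DTree X n Y) (f : Set ((Fin n → X) × Y)) : Prop :=
  ∀ x : Fin n → X, (∃ y, (x, y) ∈ f) → (x, T.eval x) ∈ f

/-- The weighted decision tree complexity `D(f,[w₁,…,wₙ])`: the minimal weighted
depth over all decision trees computing `f`. -/
noncomputable def wDT {X Y : Type} {n : ℕ} [Fintype X]
    (f : Set ((Fin n → X) × Y)) (w : Fin n → ℕ) : ℕ :=
  sInf {d | ∃ T : DTree X n Y, Computes T f ∧ T.wdepth w = d}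

/-- The (unweighted) decision tree complexity `D(f) = D(f,[1,…,1])`. -/
noncomputable def DT {X Y : Type} {n : ℕ} [Fintype X] (f : Set ((Fin n → X) × Y)) : ℕ :=
  wDT f fun _ => 1

/-- A relation `f` is constant if there exists `y` with `f⁻¹(y) = dom f`. -/
def ConstantRel {X Y : Type} {n : ℕ} (f : Set ((Fin n → X) × Y)) : Prop :=
  ∃ y : Y, ∀ x : Fin n → X, (x, y) ∈ f ↔ ∃ y', (x, y') ∈ f

/-- A relation `f` is trivial if for every `y`, `f⁻¹(y) = dom f`. -/
def TrivialRel {X Y : Type} {n : ℕ} (f : Set ((Fin n → X) × Y)) : Prop :=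
  ∀ y : Y, ∀ x : Fin n → X, (x, y) ∈ f ↔ ∃ y', (x, y') ∈ f

/-- The restriction `f_{i←b} = {(x,y) ∈ f : x_i = b}`. -/
def restrictRel {X Y : Type} {n : ℕ} (f : Set ((Fin n → X) × Y)) (i : Fin n) (b : X) :
    Set ((Fin n → X) × Y) := {p ∈ f | p.1 i = b}

/-- The index, inside a string split into `n` consecutive blocks of lengths
`m 0, …, m (n-1)`, of the `j`'th position of the `i`'th block. -/
def blockIdx {n : ℕ} {m : Fin n → ℕ} (i : Fin n) (j : Fin (m i)) : Fin (∑ k, m k) :=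
  ⟨(∑ k ∈ Finset.univ.filter (fun k => k < i), m k) + j.val, by
    have hj := j.isLt
    have h1 : (∑ k ∈ Finset.univ.filter (fun k => k < i), m k) + j.val
        < ∑ k ∈ insert i (Finset.univ.filter (fun k => k < i)), m k := by
      rw [Finset.sum_insert (by simp)]
      omega
    exact h1.trans_le (Finset.sum_le_sum_of_subset fun x _ => Finset.mem_univ x)⟩

/-- The `i`'th block (of length `m i`) of the input `x`. -/
def block {X : Type} {n : ℕ} {m : Fin n → ℕ} (x : Fin (∑ k, m k) → X) (i : Fin n) :
    Fin (m i) → X := fun j => x (blockIdx i j)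

/-- The composition `g ∘ (f¹,…,fⁿ)` of an outer relation `g ⊆ Y^n × Z` with inner
relations `fⁱ ⊆ X^{mᵢ} × Y`:
`{(x,z) : ∃ y ∈ Y^n, (∀ i, (xⁱ, yᵢ) ∈ fⁱ) ∧ (y,z) ∈ g}`. -/
def Compose {X Y Z : Type} {n : ℕ} {m : Fin n → ℕ}
    (g : Set ((Fin n → Y) × Z)) (f : (i : Fin n) → Set ((Fin (m i) → X) × Y)) :
    Set ((Fin (∑ k, m k) → X) × Z) :=
  {p | ∃ y : Fin n → Y, (∀ i, (block p.1 i, y i) ∈ f i) ∧ (y, p.2) ∈ g}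

/-- The relation `ḡ` obtained from `g` by substituting, for each `i` such that the
inner relation `fⁱ` is constant with (unique) value `bᵢ`, the constant `bᵢ` as the
`i`'th input to `g`. -/
def substConst {X Y Z : Type} {n : ℕ} {m : Fin n → ℕ}
    (g : Set ((Fin n → Y) × Z)) (f : (i : Fin n) → Set ((Fin (m i) → X) × Y)) :
    Set ((Fin n → Y) × Z) :=
  {p ∈ g | ∀ i b, (∀ x, (x, b) ∈ f i ↔ ∃ y', (x, y') ∈ f i) → p.1 i = b}

theorem exists_mem_not_and_not_mem_of_not_preimage_eq_dom {α : Type} (f : Set (α × Bool))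
    {b : Bool} (h : ¬ ∀ x, (x, b) ∈ f ↔ ∃ y, (x, y) ∈ f) : ∃ x, (x, !b) ∈ f ∧ (x, b) ∉ f := by
  push Not at h
  obtain ⟨x, ⟨hb, hdom⟩ | ⟨hb, y, hy⟩⟩ := h
  · exact absurd ⟨b, hb⟩ (not_exists.2 hdom)
  · obtain rfl : y = !b := Bool.eq_not.2 fun hyb => hb (hyb ▸ hy)
    exact ⟨x, hy, hb⟩

theorem blockIdx_eq_finSigmaFinEquiv {n : ℕ} {m : Fin n → ℕ} (i : Fin n) (j : Fin (m i)) :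
    blockIdx i j = finSigmaFinEquiv ⟨i, j⟩ := by
  ext
  rw [finSigmaFinEquiv_apply]
  simp only [blockIdx]
  congr 1
  calc ∑ k with k < i, m k = ∑ k ∈ Finset.univ.map (Fin.castLEEmb i.2.le), m k := by
        congr 1
        ext k
        simpa using ⟨fun hk => ⟨⟨k, hk⟩, rfl⟩, fun ⟨l, hl⟩ => hl ▸ l.2⟩
    _ = _ := Finset.sum_map _ _ _

theorem exists_block_eq {X : Type} {n : ℕ} {m : Fin n → ℕ} (xs : ∀ i, Fin (m i) → X) :
    ∃ x : Fin (∑ k, m k) → X, ∀ i, block x i = xs i :=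
  ⟨fun k => Sigma.uncurry xs (finSigmaFinEquiv.symm k), fun i => by
    funext j
    rw [block, blockIdx_eq_finSigmaFinEquiv, Equiv.symm_apply_apply]
    rfl⟩

theorem exists_blocks_of_mem_substConst {X Z : Type} {n : ℕ} {m : Fin n → ℕ}
    {g : Set ((Fin n → Bool) × Z)} {f : (i : Fin n) → Set ((Fin (m i) → X) × Bool)}
    {y : Fin n → Bool} {z : Z} (h : (y, z) ∈ substConst g f) :
    ∃ xs : ∀ i, Fin (m i) → X, ∀ i, (xs i, y i) ∈ f i ∧ (xs i, !y i) ∉ f i := by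
  have hforced : ∀ i, ¬ ∀ x, (x, !y i) ∈ f i ↔ ∃ b, (x, b) ∈ f i := fun i hi =>
    Bool.not_ne_self (y i) (h.2 i _ hi).symm
  choose xs hxs using fun i => exists_mem_not_and_not_mem_of_not_preimage_eq_dom _ (hforced i)
  exact ⟨xs, fun i => by simpa using hxs i⟩

theorem composition_base_case_general {X Z : Type} {n : ℕ} {m : Fin n → ℕ}
    (g : Set ((Fin n → Bool) × Z)) (f : (i : Fin n) → Set ((Fin (m i) → X) × Bool))
    (hconst : ConstantRel (Compose g f)) :
    ConstantRel (substConst g f) := by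
  obtain ⟨z₀, hz₀⟩ := hconst
  refine ⟨z₀, fun y => ⟨fun h => ⟨z₀, h⟩, ?_⟩⟩
  rintro ⟨z, hyz⟩
  obtain ⟨xs, hxs⟩ := exists_blocks_of_mem_substConst hyz
  obtain ⟨x, hx⟩ := exists_block_eq xs
  have hxz : (x, z) ∈ Compose g f := ⟨y, fun i => hx i ▸ (hxs i).1, hyz.1⟩
  obtain ⟨y', hy'f, hy'g⟩ := (hz₀ x).2 ⟨z, hxz⟩
  have hy' : y' = y := funext fun i =>
    Bool.not_eq_not.1 fun hne => (hxs i).2 (hne ▸ hx i ▸ hy'f i)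
  exact ⟨hy' ▸ hy'g, hyz.2⟩

/-- Base case of the composition theorem: if `h = g ∘ (f¹,…,fⁿ)` is
constant, with each `fⁱ` boolean-valued and non-trivial, then `ḡ` is constant. -/
theorem composition_base_case {X Z : Type} [Fintype X] [Nonempty X]
    [Fintype Z] [Nonempty Z] {n : ℕ} {m : Fin n → ℕ}
    (g : Set ((Fin n → Bool) × Z)) (f : (i : Fin n) → Set ((Fin (m i) → X) × Bool))
    (hf : ∀ i, ¬ TrivialRel (f i))
    (hconst : ConstantRel (Compose g f)) :
    ConstantRel (substConst g f) :=
  composition_base_case_general g f hconst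
end

section
/- (Failure of the composition theorem for non-boolean inner functions.) There exist total functions f : {0,1}² → {0,1,2} and g : {0,1,2}² → {0,1,2} such that D(f) = 2, D(g) = 2, but the composed total function h : {0,1}⁴ → {0,1,2} defined by h(x₁,x₂,x₃,x₄) = g(f(x₁,x₂), f(x₃,x₄)) satisfies D(h) = 3 < D(f)·D(g). (One such choice: f(x₁,x₂) = 0 if x₁ = 0, and f(x₁,x₂) = 1 + x₂ if x₁ = 1; g(y₁,y₂) = y₂ if y₁ = 0, and g(y₁,y₂) = y₁ if y₁ ∈ {1,2}.) -/
/-- The decision tree complexity of a total function `F : X^n → Y`: the minimal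
depth over all decision trees `T` computing `F` (i.e. with `T.eval = F`). -/
noncomputable def DTfun {X Y : Type} [Fintype X] {n : ℕ} (F : (Fin n → X) → Y) : ℕ :=
  sInf {d | ∃ T : DTree X n Y, (∀ x, T.eval x = F x) ∧ T.wdepth (fun _ => 1) = d}


/-! A tree of depth `d` reads at most `d` coordinates along the path of any input `x`, and those
coordinates already determine its output; so if every set of coordinates pinning down `F x` has
at least `d` elements, then `D(F) ≥ d`. For `h` take `x = (0,0,1,0)`, where `h x = 1`: flipping
`x₄` gives `2`, flipping `x₃` gives `0`, and flipping both `x₁, x₂` gives `2`, so no two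
coordinates suffice. Conversely three queries do: if `x₁ = 1` then `f(x₁,x₂) ∈ {1,2}` is the
output of `g` and is read off from `x₂`; if `x₁ = 0` then `g` returns `f(x₃,x₄)`. -/

def IsCertificate {X Y : Type} {n : ℕ} (F : (Fin n → X) → Y) (x : Fin n → X)
    (S : Finset (Fin n)) : Prop :=
  ∀ x' : Fin n → X, (∀ i ∈ S, x' i = x i) → F x' = F x

instance {X Y : Type} {n : ℕ} [Fintype X] [DecidableEq X] [DecidableEq Y]
    (F : (Fin n → X) → Y) (x : Fin n → X) (S : Finset (Fin n)) :
    Decidable (IsCertificate F x S) := by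
  unfold IsCertificate
  infer_instance

namespace DTree

variable {X Y : Type}

theorem exists_isCertificate_card_le_wdepth [Fintype X] {n : ℕ} (T : DTree X n Y)
    (x : Fin n → X) :
    ∃ S : Finset (Fin n), S.card ≤ T.wdepth (fun _ => 1) ∧ IsCertificate T.eval x S := by
  induction T with
  | leaf y => exact ⟨∅, le_rfl, fun _ _ => rfl⟩
  | node i c ih =>
    obtain ⟨S, hcard, hcert⟩ := ih (x i)
    refine ⟨insert i S, ?_, fun x' hx' => ?_⟩
    · have hchild : (c (x i)).wdepth (fun _ => 1) ≤ Finset.univ.sup fun b => (c b).wdepth _ :=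
        Finset.le_sup (f := fun b => (c b).wdepth _) (Finset.mem_univ (x i))
      calc (insert i S).card ≤ S.card + 1 := Finset.card_insert_le i S
        _ ≤ (node i c).wdepth (fun _ => 1) := by rw [wdepth]; omega
    · have hi : x' i = x i := hx' i (Finset.mem_insert_self i S)
      change (c (x' i)).eval x' = (c (x i)).eval x
      rw [hi]
      exact hcert x' fun j hj => hx' j (Finset.mem_insert_of_mem hj)

def queryPair (F : (Fin 2 → X) → Y) : DTree X 2 Y :=
  node 0 fun a => node 1 fun b => leaf (F ![a, b])

theorem eval_queryPair (F : (Fin 2 → X) → Y) (x : Fin 2 → X) : (queryPair F).eval x = F x := by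
  change F ![x 0, x 1] = F x
  congr 1
  ext i
  fin_cases i <;> rfl

theorem wdepth_queryPair [Fintype X] [Nonempty X] (F : (Fin 2 → X) → Y) :
    (queryPair F).wdepth (fun _ => 1) = 2 := by
  simp [queryPair, wdepth, Finset.sup_const Finset.univ_nonempty]

end DTree

theorem DTfun_eq_wdepth_of_isCertificate {X Y : Type} [Fintype X] {n : ℕ}
    {F : (Fin n → X) → Y} (T : DTree X n Y) (hT : ∀ x, T.eval x = F x) (x : Fin n → X)
    (hx : ∀ S, IsCertificate F x S → T.wdepth (fun _ => 1) ≤ S.card) :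
    DTfun F = T.wdepth (fun _ => 1) := by
  refine le_antisymm (Nat.sInf_le ⟨T, hT, rfl⟩) ?_
  obtain ⟨T', hT', hdepth⟩ : DTfun F ∈ _ := Nat.sInf_mem ⟨_, T, hT, rfl⟩
  obtain ⟨S, hcard, hcert⟩ := T'.exists_isCertificate_card_le_wdepth x
  have hcertF : IsCertificate F x S := fun x' hx' => by
    rw [← hT', ← hT']
    exact hcert x' hx'
  calc T.wdepth (fun _ => 1) ≤ S.card := hx S hcertF
    _ ≤ DTfun F := hcard.trans_eq hdepth

def innerFun : (Fin 2 → Bool) → Fin 3 := fun x =>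
  if x 0 then (if x 1 then 2 else 1) else 0

def outerFun : (Fin 2 → Fin 3) → Fin 3 := fun y =>
  if y 0 = 0 then y 1 else y 0

theorem two_mul_add_lt_four (i j : Fin 2) : 2 * i.val + j.val < 4 := by omega

def composedFun : (Fin 4 → Bool) → Fin 3 := fun x =>
  outerFun fun i => innerFun fun j => x ⟨2 * i.val + j.val, two_mul_add_lt_four i j⟩

def composedTree : DTree Bool 4 (Fin 3) :=
  .node 0 fun
    | true => .node 1 fun x₂ => .leaf (if x₂ then 2 else 1)
    | false => .node 2 fun x₃ => .node 3 fun x₄ => .leaf (innerFun ![x₃, x₄])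

theorem DTfun_innerFun : DTfun innerFun = 2 := by
  rw [DTfun_eq_wdepth_of_isCertificate _ (DTree.eval_queryPair innerFun) ![true, false]
    (by rw [DTree.wdepth_queryPair]; decide), DTree.wdepth_queryPair]

theorem DTfun_outerFun : DTfun outerFun = 2 := by
  rw [DTfun_eq_wdepth_of_isCertificate _ (DTree.eval_queryPair outerFun) ![0, 0]
    (by rw [DTree.wdepth_queryPair]; decide), DTree.wdepth_queryPair]

theorem DTfun_composedFun : DTfun composedFun = 3 := by
  have hdepth : composedTree.wdepth (fun _ => 1) = 3 := by decide
  rw [DTfun_eq_wdepth_of_isCertificate composedTree (by decide) ![false, false, true, false]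
    (by rw [hdepth]; decide), hdepth]

/-- Failure of the composition theorem for non-boolean inner
functions: there are total functions `f : {0,1}² → {0,1,2}` and
`g : {0,1,2}² → {0,1,2}` with `D(f) = D(g) = 2` but, for
`h(x₁,x₂,x₃,x₄) = g(f(x₁,x₂), f(x₃,x₄))`, `D(h) = 3 < D(f)·D(g)`. -/
theorem composition_counterexample :
    ∃ (f : (Fin 2 → Bool) → Fin 3) (g : (Fin 2 → Fin 3) → Fin 3),
      DTfun f = 2 ∧ DTfun g = 2 ∧
      DTfun (fun x : Fin 4 → Bool =>
        g fun i => f fun j =>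
          x ⟨2 * i.val + j.val, by have := i.isLt; have := j.isLt; omega⟩) = 3 ∧
      3 < DTfun f * DTfun g := by
  refine ⟨innerFun, outerFun, DTfun_innerFun, DTfun_outerFun, DTfun_composedFun, ?_⟩
  rw [DTfun_innerFun, DTfun_outerFun]
  norm_num
end
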